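/- arXiv:0806.0044 — 5 statements merged into one kernel-verified Lean document; each statement's English description precedes it below -/
import Mathlib

section
/- Let p be a prime, q a power of p, P an irreducible monic polynomial of degree d over 𝔽_q, and let F = 𝔽_q[T]/(P) be its residue field. Then the trace from F to 𝔽_q of the class of T^k / P'(T) equals 0 for 0 ≤ k ≤ d−2 and equals 1 for k = d−1. -/
/-!
Euler's lemma. For a power basis `1, x, …, x^(n-1)` of a separable extension `L/K` with
`f = minpoly K x`, the trace-dual basis is `aᵢ / f'(x)` where `f / (X - x) = ∑ aᵢ Xⁱ`.
Since `f / (X - x)` is monic of degree `n - 1`, the last dual vector is `1 / f'(x)`, so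
`Tr(xʲ / f'(x)) = δ_{j, n-1}` for `j < n`. For `L = 𝔽_q[T]/(P)` and `x` the class of `T`,
`f` is `P`.
-/

open Polynomial

theorem PowerBasis.traceDual_last_eq_inv_aeval_derivative {K L : Type*} [Field K] [Field L]
    [Algebra K L] [FiniteDimensional K L] [Algebra.IsSeparable K L] (pb : PowerBasis K L)
    (hdim : 0 < pb.dim) :
    pb.basis.traceDual ⟨pb.dim - 1, by omega⟩ =
      (aeval pb.gen (derivative (minpoly K pb.gen)))⁻¹ := by
  have hlead : (minpolyDiv K pb.gen).coeff (pb.dim - 1) = 1 := by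
    rw [← pb.natDegree_minpoly, ← natDegree_minpolyDiv]
    exact (minpolyDiv_monic pb.isIntegral_gen).coeff_natDegree
  rw [Module.Basis.traceDual_powerBasis_eq, Fin.val_mk, hlead, one_div]

theorem PowerBasis.trace_gen_pow_mul_inv_aeval_derivative {K L : Type*} [Field K] [Field L]
    [Algebra K L] [Algebra.IsSeparable K L] (pb : PowerBasis K L) {j : ℕ} (hj : j < pb.dim) :
    Algebra.trace K L (pb.gen ^ j * (aeval pb.gen (derivative (minpoly K pb.gen)))⁻¹) =
      if j = pb.dim - 1 then 1 else 0 := by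
  have := pb.finite
  have hdual := pb.traceDual_last_eq_inv_aeval_derivative (by omega)
  have := pb.basis.trace_mul_traceDual ⟨j, hj⟩ ⟨pb.dim - 1, by omega⟩
  rw [hdual, pb.basis_eq_pow] at this
  simpa only [Fin.mk.injEq] using this

theorem AdjoinRoot.trace_mk_X_pow_mul_inv_mk_derivative {K : Type*} [Field K] (P : K[X])
    [Fact (Irreducible P)] [Algebra.IsSeparable K (AdjoinRoot P)] (hmonic : P.Monic) {j : ℕ}
    (hj : j < P.natDegree) :
    Algebra.trace K (AdjoinRoot P) (mk P (X ^ j) * (mk P (derivative P))⁻¹) =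
      if j = P.natDegree - 1 then 1 else 0 := by
  have hP : P ≠ 0 := hmonic.ne_zero
  have hmin : minpoly K (root P) = P := by
    rw [minpoly_root hP, hmonic.leadingCoeff, inv_one, map_one, mul_one]
  have := (powerBasis hP).trace_gen_pow_mul_inv_aeval_derivative (j := j)
    (by rwa [powerBasis_dim])
  rwa [powerBasis_gen, powerBasis_dim, hmin, aeval_eq, ← mk_X, ← map_pow] at this

theorem stmt1_general
    (Fq : Type) [Field Fq] [Fintype Fq]
    (P : Polynomial Fq) [hirr : Fact (Irreducible P)] (hmonic : P.Monic)
    (d : ℕ) (hd : P.natDegree = d) :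
    (∀ k : ℕ, k + 2 ≤ d →
      Algebra.trace Fq (AdjoinRoot P)
        (AdjoinRoot.mk P (X ^ k) * (AdjoinRoot.mk P (derivative P))⁻¹) = 0) ∧
    Algebra.trace Fq (AdjoinRoot P)
        (AdjoinRoot.mk P (X ^ (d - 1)) * (AdjoinRoot.mk P (derivative P))⁻¹) = 1 := by
  subst hd
  -- finiteness lets instance search derive separability from perfectness of `Fq`
  have := hmonic.finite_adjoinRoot
  have hdeg : 0 < P.natDegree := hirr.out.natDegree_pos
  refine ⟨fun k hk => ?_, ?_⟩
  · rw [AdjoinRoot.trace_mk_X_pow_mul_inv_mk_derivative P hmonic (by omega), if_neg (by omega)]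
  · rw [AdjoinRoot.trace_mk_X_pow_mul_inv_mk_derivative P hmonic (by omega), if_pos rfl]

/-- Lemma 2.3: let `P` be an irreducible monic polynomial of degree `d` over `𝔽_q`
(`q` a power of the prime `p`), and `F = 𝔽_q[T]/(P)` its residue field. Then the trace
from `F` to `𝔽_q` of the class of `T^k / P'(T)` is `0` for `0 ≤ k ≤ d − 2` and `1`
for `k = d − 1`. -/
theorem stmt1 (p q e : ℕ) (hp : p.Prime) (he : 0 < e) (hq : q = p ^ e)
    (Fq : Type) [Field Fq] [Fintype Fq] (hcard : Fintype.card Fq = q)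
    (P : Polynomial Fq) [hirr : Fact (Irreducible P)] (hmonic : P.Monic)
    (d : ℕ) (hd : P.natDegree = d) :
    (∀ k : ℕ, k + 2 ≤ d →
      Algebra.trace Fq (AdjoinRoot P)
        (AdjoinRoot.mk P (X ^ k) * (AdjoinRoot.mk P (derivative P))⁻¹) = 0) ∧
    Algebra.trace Fq (AdjoinRoot P)
        (AdjoinRoot.mk P (X ^ (d - 1)) * (AdjoinRoot.mk P (derivative P))⁻¹) = 1 :=
  stmt1_general Fq P (hirr := hirr) hmonic d hd
end

section
/- Let C be a smooth projective curve of genus g over 𝔽_q, and suppose there exist complex numbers ω_1, …, ω_{2g} such that for all n ≥ 1, |C(𝔽_{q^n})| = q^n + 1 − ∑_{ν=1}^{2g} ω_ν^n, with the ω_ν invariant (as a multiset) under ω ↦ q/ω. If for every ε > 0 there exist a positive integer m and a constant B such that ||C(𝔽_{q^{nm}})| − q^{nm} − 1| ≤ B q^{nm(1/2+ε)} for all n ≥ 1, then |ω_ν| = √q for every ν. -/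
/-!
Suppose the power sums `∑ a_ν^n` are `O(ρ^n)` but some `a_ν` has modulus `> ρ`, and let `w` be
one of maximal modulus. Then `∑ (a_ν/w)^n → 0`, so its Cesàro means tend to `0` as well. But the
Cesàro means of `u^n` tend to `0` for `|u| ≤ 1`, `u ≠ 1` (bounded geometric partial sums), so
those of `∑ (a_ν/w)^n` tend to the multiplicity of `w`, a contradiction. Applied to the `m`-th
powers of the `ω_ν`, this gives `|ω_ν| ≤ q^{1/2+ε}` for every `ε > 0`, hence `|ω_ν| ≤ √q`;
the symmetry `ω ↦ q/ω` turns this into the reverse inequality.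
-/

/-- An abstract interface for a smooth projective curve over the finite field `𝔽_q`:
`Point` is the set of closed points, `deg` the degree of a closed point, `g` the genus,
`prin` the subgroup of principal divisors (divisors are elements of `Point →₀ ℤ`),
`l D` the dimension of the Riemann–Roch space of the divisor `D`, `canonical` a canonical
divisor, and `N n = |C(𝔽_{q^n})|`.  The axioms are the Riemann–Roch theorem, `l(0) = 1`,
that principal divisors have degree `0`, that `l(D) ≥ 1` iff `D` is linearly equivalent to
an effective divisor, and that `|C(𝔽_{q^n})| = ∑_{deg v ∣ n} deg v`. -/
structure SmoothProjCurve (q : ℕ) : Type 1 where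
  Point : Type
  nonempty : Nonempty Point
  deg : Point → ℕ
  deg_pos : ∀ v, 0 < deg v
  finite_deg : ∀ d : ℕ, {v : Point | deg v = d}.Finite
  g : ℕ
  prin : AddSubgroup (Point →₀ ℤ)
  l : (Point →₀ ℤ) → ℕ
  canonical : Point →₀ ℤ
  riemann_roch : ∀ D : Point →₀ ℤ,
    (l D : ℤ) = D.sum (fun v k => k * (deg v : ℤ)) + 1 - (g : ℤ) + l (canonical - D)
  l_zero : l 0 = 1
  deg_prin : ∀ D ∈ prin, D.sum (fun v k => k * (deg v : ℤ)) = 0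
  l_pos_iff : ∀ D : Point →₀ ℤ,
    1 ≤ l D ↔ ∃ f ∈ prin, ∀ v, 0 ≤ f v + D v
  N : ℕ → ℕ
  N_eq : ∀ n : ℕ, 0 < n → N n = ∑ᶠ (v : Point) (_ : deg v ∣ n), deg v

/-- The degree of a divisor `D = ∑ D_v ⬝ v`, namely `∑ D_v deg v`. -/
def SmoothProjCurve.degDiv {q : ℕ} (C : SmoothProjCurve q) (D : C.Point →₀ ℤ) : ℤ :=
  D.sum fun v k => k * (C.deg v : ℤ)

open Filter Finset Topology

noncomputable def cesaroMean {E : Type*} [AddCommGroup E] [Module ℝ E] (u : ℕ → E) (N : ℕ) : E :=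
  (N⁻¹ : ℝ) • ∑ n ∈ range N, u n

section Cesaro

variable {E : Type*} [NormedAddCommGroup E] [NormedSpace ℝ E]

lemma tendsto_cesaroMean_of_tendsto {u : ℕ → E} {l : E} (h : Tendsto u atTop (𝓝 l)) :
    Tendsto (cesaroMean u) atTop (𝓝 l) :=
  h.cesaro_smul

lemma tendsto_cesaroMean_zero_of_norm_sum_range_le {u : ℕ → E} {K : ℝ}
    (h : ∀ N, ‖∑ n ∈ range N, u n‖ ≤ K) : Tendsto (cesaroMean u) atTop (𝓝 0) := by
  refine squeeze_zero_norm (fun N => ?_) (tendsto_const_div_atTop_nhds_zero_nat K)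
  rw [cesaroMean, norm_smul, norm_inv, Real.norm_natCast, div_eq_inv_mul]
  exact mul_le_mul_of_nonneg_left (h N) (inv_nonneg.2 N.cast_nonneg)

lemma cesaroMean_sum {ι : Type*} (s : Finset ι) (u : ι → ℕ → E) :
    cesaroMean (fun n => ∑ i ∈ s, u i n) = fun N => ∑ i ∈ s, cesaroMean (u i) N := by
  funext N
  simp only [cesaroMean, sum_comm (s := range N), Finset.smul_sum]

end Cesaro

lemma norm_geom_sum_le_of_norm_le_one {𝕜 : Type*} [NormedField 𝕜] {u : 𝕜} (hu : ‖u‖ ≤ 1)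
    (hne : u ≠ 1) (N : ℕ) :
    ‖∑ n ∈ range N, u ^ n‖ ≤ 2 / ‖u - 1‖ := by
  rw [geom_sum_eq hne, norm_div]
  gcongr
  calc ‖u ^ N - 1‖ ≤ ‖u ^ N‖ + ‖(1 : 𝕜)‖ := norm_sub_le _ _
    _ ≤ 1 + 1 := by
      rw [norm_pow, norm_one]
      gcongr
      exact pow_le_one₀ (norm_nonneg u) hu
    _ = 2 := one_add_one_eq_two

section PowerSums

variable {𝕜 : Type*} [RCLike 𝕜]

lemma tendsto_cesaroMean_pow [DecidableEq 𝕜] {u : 𝕜} (hu : ‖u‖ ≤ 1) :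
    Tendsto (cesaroMean (u ^ ·)) atTop (𝓝 (if u = 1 then 1 else 0)) := by
  split_ifs with h
  · subst h
    simpa using tendsto_cesaroMean_of_tendsto (tendsto_const_nhds (x := (1 : 𝕜)))
  · exact tendsto_cesaroMean_zero_of_norm_sum_range_le (norm_geom_sum_le_of_norm_le_one hu h)

lemma tendsto_cesaroMean_sum_pow [DecidableEq 𝕜] {ι : Type*} [Fintype ι] (u : ι → 𝕜)
    (hu : ∀ i, ‖u i‖ ≤ 1) :
    Tendsto (cesaroMean fun n => ∑ i, u i ^ n) atTop (𝓝 (#{i | u i = 1} : 𝕜)) := by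
  rw [cesaroMean_sum]
  simpa [sum_boole] using tendsto_finsetSum univ fun i _ => tendsto_cesaroMean_pow (hu i)

lemma norm_le_of_norm_sum_pow_le {ι : Type*} [Fintype ι] (a : ι → 𝕜) {B ρ : ℝ} (hρ : 0 ≤ ρ)
    (hb : ∀ n, 1 ≤ n → ‖∑ i, a i ^ n‖ ≤ B * ρ ^ n) (i : ι) : ‖a i‖ ≤ ρ := by
  classical
  by_contra! hlt
  obtain ⟨i₀, -, hmax⟩ := exists_max_image univ (‖a ·‖) ⟨i, mem_univ i⟩
  have hr : ρ < ‖a i₀‖ := hlt.trans_le (hmax i (mem_univ i))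
  have hr₀ : 0 < ‖a i₀‖ := hρ.trans_lt hr
  have hzero : Tendsto (fun n => ∑ j, (a j / a i₀) ^ n) atTop (𝓝 0) := by
    have hgeom : Tendsto (fun n => B * (ρ / ‖a i₀‖) ^ n) atTop (𝓝 0) := by
      simpa using (tendsto_pow_atTop_nhds_zero_of_lt_one (by positivity)
        ((div_lt_one hr₀).2 hr)).const_mul B
    refine squeeze_zero_norm' ?_ hgeom
    filter_upwards [eventually_ge_atTop 1] with n hn
    simp only [div_pow, ← sum_div, norm_div, norm_pow, mul_div_assoc']
    gcongr
    exact hb n hn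
  have hmult := tendsto_cesaroMean_sum_pow (fun j => a j / a i₀) fun j => by
    rw [norm_div, div_le_one hr₀]
    exact hmax j (mem_univ j)
  have hcard : #{j | a j / a i₀ = 1} = 0 := by
    exact_mod_cast tendsto_nhds_unique hmult (tendsto_cesaroMean_of_tendsto hzero)
  exact (card_pos.2 ⟨i₀, mem_filter.2 ⟨mem_univ _, div_self (norm_pos_iff.1 hr₀)⟩⟩).ne' hcard

lemma norm_le_rpow_of_norm_sum_pow_mul_le {ι : Type*} [Fintype ι] (a : ι → 𝕜) {q s B : ℝ}
    (hq : 0 < q) {m : ℕ} (hm : 0 < m)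
    (hb : ∀ n, 1 ≤ n → ‖∑ i, a i ^ (n * m)‖ ≤ B * q ^ (((n * m : ℕ) : ℝ) * s)) (i : ι) :
    ‖a i‖ ≤ q ^ s := by
  have hrpow : ∀ k : ℕ, q ^ ((k : ℝ) * s) = (q ^ s) ^ k := fun k => by
    rw [← Real.rpow_natCast, ← Real.rpow_mul hq.le, mul_comm]
  have hpow := norm_le_of_norm_sum_pow_le (fun i => a i ^ m) (by positivity) (ρ := (q ^ s) ^ m)
    (fun n hn => by
      simpa only [← pow_mul, mul_comm m n, hrpow, ← pow_mul] using hb n hn) i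
  rw [norm_pow] at hpow
  exact le_of_pow_le_pow_left₀ hm.ne' (by positivity) hpow

lemma norm_le_sqrt_of_norm_sum_pow_le {ι : Type*} [Fintype ι] (a : ι → 𝕜) {q : ℝ} (hq : 0 < q)
    (h : ∀ ε : ℝ, 0 < ε → ∃ m : ℕ, 0 < m ∧ ∃ B : ℝ, ∀ n : ℕ, 1 ≤ n →
      ‖∑ i, a i ^ (n * m)‖ ≤ B * q ^ (((n * m : ℕ) : ℝ) * (1 / 2 + ε))) (i : ι) :
    ‖a i‖ ≤ √q := by
  have hcont : Tendsto (fun ε : ℝ => q ^ (1 / 2 + ε)) (𝓝[>] 0) (𝓝 (q ^ (1 / 2 : ℝ))) := by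
    have := (Real.continuousAt_const_rpow hq.ne').comp (f := fun ε : ℝ => 1 / 2 + ε)
      (x := 0) (by fun_prop)
    simpa [Function.comp_def] using this.tendsto.mono_left nhdsWithin_le_nhds
  rw [Real.sqrt_eq_rpow]
  refine ge_of_tendsto hcont (eventually_nhdsWithin_of_forall fun ε hε => ?_)
  obtain ⟨m, hm, B, hB⟩ := h ε hε
  exact norm_le_rpow_of_norm_sum_pow_mul_le a hq hm hB i

end PowerSums

lemma norm_eq_sqrt_of_forall_norm_le_sqrt {ι : Type*} (ω : ι → ℂ) {q : ℝ} (hq : 0 ≤ q)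
    (hω : ∀ i, ω i ≠ 0) (f : ι → ι) (hf : ∀ i, ω (f i) = q / ω i) (hle : ∀ i, ‖ω i‖ ≤ √q)
    (i : ι) : ‖ω i‖ = √q := by
  have hpos : 0 < ‖ω i‖ := norm_pos_iff.2 (hω i)
  have hinv : q / ‖ω i‖ ≤ √q := by
    simpa [hf, norm_div, abs_of_nonneg hq] using hle (f i)
  rw [div_le_iff₀ hpos] at hinv
  nlinarith [Real.sq_sqrt hq, Real.sqrt_nonneg q, hle i]

/-- Lemma 3.1: if the point counts of the curve satisfy
`|C(𝔽_{q^n})| = q^n + 1 − ∑_ν ω_ν^n` with the `ω_ν` (as a multiset) invariant under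
`ω ↦ q/ω`, and if for every `ε > 0` there are `m` and `B` with
`||C(𝔽_{q^{nm}})| − q^{nm} − 1| ≤ B q^{nm(1/2+ε)}` for all `n ≥ 1`, then `|ω_ν| = √q`
for every `ν` (the Riemann hypothesis for `C`). -/
theorem stmt5 (q : ℕ) (hq : 1 < q) (C : SmoothProjCurve q)
    (ω : Fin (2 * C.g) → ℂ) (hω : ∀ ν, ω ν ≠ 0)
    (hformula : ∀ n : ℕ, 1 ≤ n → (C.N n : ℂ) = (q : ℂ) ^ n + 1 - ∑ ν, ω ν ^ n)
    (hsym : ∃ σ : Equiv.Perm (Fin (2 * C.g)), ∀ ν, ω (σ ν) = (q : ℂ) / ω ν)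
    (hbound : ∀ ε : ℝ, 0 < ε → ∃ m : ℕ, 0 < m ∧ ∃ B : ℝ, ∀ n : ℕ, 1 ≤ n →
      |(C.N (n * m) : ℝ) - (q : ℝ) ^ (n * m) - 1| ≤
        B * (q : ℝ) ^ (((n * m : ℕ) : ℝ) * (1 / 2 + ε))) :
    ∀ ν, ‖ω ν‖ = Real.sqrt q := by
  have hq₀ : (0 : ℝ) < q := by exact_mod_cast zero_lt_one.trans hq
  obtain ⟨σ, hσ⟩ := hsym
  have hpowsum : ∀ n, 1 ≤ n → ‖∑ ν, ω ν ^ n‖ = |(C.N n : ℝ) - (q : ℝ) ^ n - 1| := by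
    intro n hn
    have : ∑ ν, ω ν ^ n = -(((C.N n : ℝ) - (q : ℝ) ^ n - 1 : ℝ) : ℂ) := by
      push_cast
      rw [hformula n hn]
      ring
    rw [this, norm_neg, Complex.norm_real, Real.norm_eq_abs]
  refine norm_eq_sqrt_of_forall_norm_le_sqrt ω hq₀.le hω σ (by exact_mod_cast hσ)
    (norm_le_sqrt_of_norm_sum_pow_le ω hq₀ fun ε hε => ?_)
  obtain ⟨m, hm, B, hB⟩ := hbound ε hε
  exact ⟨m, hm, B, fun n hn => (hpowsum _ (Nat.one_le_iff_ne_zero.2 (by positivity))).trans_le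
    (hB n hn)⟩
end

section
/- Let ω_1, …, ω_{2g} be nonzero complex numbers and suppose that for every ε > 0 and all sufficiently large n, |∑_{ν=1}^{2g} ω_ν^n| ≤ B q^{n(1/2+ε)}. Then |ω_ν| ≤ √q for every ν. -/
/-!
The power sums `∑ ν ω_ν ^ n` form an exponential polynomial `∑ μ c_μ μ ^ n` over the distinct
values `μ`, with positive integer multiplicities `c_μ`. Applying `p(S)`, where `S` is the shift
of sequences and `p` vanishes at every value but `μ₀`, isolates `c_μ₀ p(μ₀) μ₀ ^ n`, which inherits
the bound `O((q ^ (1/2 + ε)) ^ n)`. Hence `|μ₀| ≤ q ^ (1/2 + ε)` for every `ε > 0`, and `ε → 0`.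
-/

open Polynomial Finset Filter Asymptotics Topology

theorem le_of_isBigO_pow_pow {r s : ℝ} (hs : 0 ≤ s)
    (h : (fun n : ℕ => r ^ n) =O[atTop] fun n => s ^ n) : r ≤ s := by
  by_contra! hsr
  have hr : 0 < r := hs.trans_lt hsr
  exact isLittleO_irrefl (.of_forall fun n => pow_ne_zero n hr.ne')
    (h.trans_isLittleO (isLittleO_pow_pow_of_lt_left hs hsr))

section

variable {𝕜 : Type*} [NormedField 𝕜] {s : ℝ}

theorem Asymptotics.IsBigO.comp_add_pow {E : Type*} [Norm E] {a : ℕ → E}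
    (ha : a =O[atTop] fun n => s ^ n) (k : ℕ) :
    (fun n => a (n + k)) =O[atTop] fun n => s ^ n := by
  have hk := ha.comp_tendsto (tendsto_add_atTop_nat k)
  simp only [Function.comp_def, pow_add, mul_comm _ (s ^ k)] at hk
  exact hk.trans (isBigO_const_mul_self _ _ _)

/-- `p(S) a`, for the shift `(S a) n = a (n + 1)`. -/
def Polynomial.shiftApply (p : 𝕜[X]) (a : ℕ → 𝕜) (n : ℕ) : 𝕜 :=
  ∑ i ∈ range (p.natDegree + 1), p.coeff i * a (n + i)

theorem Polynomial.shiftApply_sum_mul_pow (p : 𝕜[X]) (T : Finset 𝕜) (c : 𝕜 → 𝕜) (n : ℕ) :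
    p.shiftApply (fun m => ∑ μ ∈ T, c μ * μ ^ m) n = ∑ μ ∈ T, c μ * p.eval μ * μ ^ n := by
  simp only [shiftApply, mul_sum, eval_eq_sum_range, sum_mul]
  rw [sum_comm]
  refine sum_congr rfl fun μ _ => sum_congr rfl fun i _ => ?_
  ring

theorem Polynomial.isBigO_shiftApply (p : 𝕜[X]) {a : ℕ → 𝕜}
    (ha : a =O[atTop] fun n => s ^ n) : p.shiftApply a =O[atTop] fun n => s ^ n :=
  IsBigO.fun_sum fun i _ => (ha.comp_add_pow i).const_mul_left (p.coeff i)

theorem norm_le_of_isBigO_sum_mul_pow {T : Finset 𝕜} {c : 𝕜 → 𝕜} (hs : 0 ≤ s)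
    (h : (fun n => ∑ μ ∈ T, c μ * μ ^ n) =O[atTop] fun n => s ^ n)
    {μ₀ : 𝕜} (hμ₀ : μ₀ ∈ T) (hc : c μ₀ ≠ 0) : ‖μ₀‖ ≤ s := by
  classical
  set p : 𝕜[X] := ∏ μ ∈ T.erase μ₀, (X - C μ)
  have hp_root : ∀ μ ∈ T, μ ≠ μ₀ → p.eval μ = 0 := fun μ hμ hne => by
    simp only [p, eval_prod]
    exact prod_eq_zero (mem_erase.2 ⟨hne, hμ⟩) (by simp)
  have hp_ne : p.eval μ₀ ≠ 0 := by
    simp only [p, eval_prod, eval_sub, eval_X, eval_C]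
    exact prod_ne_zero_iff.2 fun μ hμ => sub_ne_zero.2 (mem_erase.1 hμ).1.symm
  have hshift : p.shiftApply (fun m => ∑ μ ∈ T, c μ * μ ^ m) =
      fun n => c μ₀ * p.eval μ₀ * μ₀ ^ n := by
    funext n
    rw [p.shiftApply_sum_mul_pow]
    exact sum_eq_single_of_mem μ₀ hμ₀ fun μ hμ hne => by rw [hp_root μ hμ hne, mul_zero, zero_mul]
  have hpow : (fun n => μ₀ ^ n) =O[atTop] fun n => s ^ n :=
    (isBigO_const_mul_left_iff (mul_ne_zero hc hp_ne)).1 (hshift ▸ p.isBigO_shiftApply h)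
  refine le_of_isBigO_pow_pow hs ?_
  simpa only [norm_pow] using hpow.norm_left

theorem norm_le_of_isBigO_sum_pow [CharZero 𝕜] {ι : Type*} [Fintype ι] {ω : ι → 𝕜} (hs : 0 ≤ s)
    (h : (fun n => ∑ ν, ω ν ^ n) =O[atTop] fun n => s ^ n) (ν : ι) : ‖ω ν‖ ≤ s := by
  classical
  refine norm_le_of_isBigO_sum_mul_pow (c := fun μ => (#{ν' | ω ν' = μ} : 𝕜)) hs ?_
    (mem_image_of_mem ω (mem_univ ν)) ?_
  · refine h.congr_left fun n => ?_
    simp only [sum_comp (· ^ n) ω, nsmul_eq_mul]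
  · exact Nat.cast_ne_zero.2 (card_ne_zero.2 ⟨ν, by simp⟩)

end

theorem stmt6_general (g : ℕ) (q : ℝ) (hq : 0 < q) (ω : Fin (2 * g) → ℂ)
    (B : ℝ)
    (hbound : ∀ ε : ℝ, 0 < ε → ∃ N₀ : ℕ, ∀ n : ℕ, N₀ ≤ n →
      ‖∑ ν, ω ν ^ n‖ ≤ B * q ^ ((n : ℝ) * (1 / 2 + ε))) :
    ∀ ν, ‖ω ν‖ ≤ Real.sqrt q := by
  intro ν
  have hle : ∀ ε > 0, ‖ω ν‖ ≤ q ^ ((1 : ℝ) / 2 + ε) := fun ε hε => by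
    obtain ⟨N₀, hN₀⟩ := hbound ε hε
    refine norm_le_of_isBigO_sum_pow (by positivity) (IsBigO.of_bound B ?_) ν
    filter_upwards [eventually_ge_atTop N₀] with n hn
    rw [Real.norm_of_nonneg (by positivity), ← Real.rpow_natCast, ← Real.rpow_mul hq.le,
      mul_comm _ (n : ℝ)]
    exact hN₀ n hn
  have hcont : ContinuousAt (fun ε : ℝ => q ^ ((1 : ℝ) / 2 + ε)) 0 :=
    (Real.continuousAt_const_rpow hq.ne').comp (continuousAt_const.add continuousAt_id)
  have hlim := hcont.tendsto.mono_left (nhdsWithin_le_nhds (s := Set.Ioi 0))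
  rw [add_zero, ← Real.sqrt_eq_rpow] at hlim
  exact ge_of_tendsto hlim (eventually_nhdsWithin_of_forall hle)

/-- The key step of Lemma 3.1: if `ω_1, …, ω_{2g}` are nonzero complex numbers such that
for every `ε > 0`, `|∑_ν ω_ν^n| ≤ B q^{n(1/2+ε)}` for all sufficiently large `n`, then
`|ω_ν| ≤ √q` for every `ν`. -/
theorem stmt6 (g : ℕ) (q : ℝ) (hq : 0 < q) (ω : Fin (2 * g) → ℂ)
    (hω : ∀ ν, ω ν ≠ 0) (B : ℝ)
    (hbound : ∀ ε : ℝ, 0 < ε → ∃ N₀ : ℕ, ∀ n : ℕ, N₀ ≤ n →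
      ‖∑ ν, ω ν ^ n‖ ≤ B * q ^ ((n : ℝ) * (1 / 2 + ε))) :
    ∀ ν, ‖ω ν‖ ≤ Real.sqrt q :=
  stmt6_general g q hq ω B hbound
end

section
/- Given nonzero complex numbers ω_1, …, ω_k, there exist infinitely many positive integers n such that Re(ω_ν^n) ≥ |ω_ν|^n / 2 for every ν = 1, …, k. -/
/-!
Write `ω_ν = |ω_ν| u_ν` with `u_ν` on the unit circle. The powers of `u = (u_ν)` in the compact
group `𝕋^k` return infinitely often to the neighbourhood of `1` where every coordinate has real part
above `1/2`: if `u^m` and `u^n` with `n - m` large are both close to a cluster point of `(u^n)`,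
then `u^(n-m)` is close to `1`.
-/

open Filter Topology

theorem frequently_pow_mem_nhds_one {G : Type*} [Group G] [TopologicalSpace G]
    [IsTopologicalGroup G] [CompactSpace G] (a : G) {U : Set G} (hU : U ∈ 𝓝 1) :
    ∃ᶠ n in atTop, a ^ n ∈ U := by
  obtain ⟨p, hp⟩ := exists_clusterPt_of_compactSpace (map (a ^ ·) (atTop : Filter ℕ))
  have hquot : Tendsto (fun yz : G × G => yz.2 * yz.1⁻¹) (𝓝 p ×ˢ 𝓝 p) (𝓝 1) := by
    rw [← nhds_prod_eq, ← mul_inv_cancel p]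
    exact (continuous_snd.mul continuous_fst.inv).tendsto (p, p)
  obtain ⟨W, hW, hWU⟩ := mem_prod_self_iff.1 (hquot hU)
  have hfreq : ∃ᶠ n in atTop, a ^ n ∈ W := mapClusterPt_iff_frequently.1 hp W hW
  refine frequently_atTop.2 fun N => ?_
  obtain ⟨m, hm⟩ := hfreq.exists
  obtain ⟨n, hn, hnW⟩ := frequently_atTop.1 hfreq (m + N)
  refine ⟨n - m, by omega, ?_⟩
  rw [pow_sub a (by omega)]
  exact hWU (Set.mk_mem_prod hm hnW)

theorem Complex.norm_pow_div_two_le_re_pow {ω : ℂ} {n : ℕ}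
    (h : 1 / 2 ≤ ((Circle.exp ω.arg ^ n : Circle) : ℂ).re) : ‖ω‖ ^ n / 2 ≤ (ω ^ n).re := by
  have hpolar : ω = ‖ω‖ * (Circle.exp ω.arg : ℂ) := by
    rw [Circle.coe_exp, norm_mul_exp_arg_mul_I]
  have hre : (ω ^ n).re = ‖ω‖ ^ n * ((Circle.exp ω.arg ^ n : Circle) : ℂ).re := by
    conv_lhs => rw [hpolar]
    rw [mul_pow, ← ofReal_pow, re_ofReal_mul, Circle.coe_pow]
  rw [hre]
  nlinarith [pow_nonneg (norm_nonneg ω) n]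

theorem stmt7_general (k : ℕ) (ω : Fin k → ℂ) :
    {n : ℕ | 0 < n ∧ ∀ ν, ‖ω ν‖ ^ n / 2 ≤ (ω ν ^ n).re}.Infinite := by
  set u : Fin k → Circle := fun ν => Circle.exp (ω ν).arg
  have hU : {z : Fin k → Circle | ∀ ν, 1 / 2 < (z ν : ℂ).re} ∈ 𝓝 1 := by
    refine eventually_all.2 fun ν => ?_
    have hcont : Continuous fun z : Fin k → Circle => (z ν : ℂ).re :=
      Complex.continuous_re.comp (continuous_subtype_val.comp (continuous_apply ν))
    exact hcont.continuousAt.eventually (lt_mem_nhds (by norm_num))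
  have hfreq := (frequently_pow_mem_nhds_one u hU).and_eventually (eventually_gt_atTop 0)
  refine (Nat.frequently_atTop_iff_infinite.1 hfreq).mono ?_
  rintro n ⟨hn, hpos⟩
  exact ⟨hpos, fun ν => Complex.norm_pow_div_two_le_re_pow (hn ν).le⟩

/-- Simultaneous Diophantine approximation: given nonzero complex numbers
`ω_1, …, ω_k`, there are infinitely many positive integers `n` with
`Re(ω_ν^n) ≥ |ω_ν|^n / 2` for every `ν`. -/
theorem stmt7 (k : ℕ) (ω : Fin k → ℂ) (hω : ∀ ν, ω ν ≠ 0) :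
    {n : ℕ | 0 < n ∧ ∀ ν, ‖ω ν‖ ^ n / 2 ≤ (ω ν ^ n).re}.Infinite :=
  stmt7_general k ω
end

section
/- Let C be a smooth projective curve of genus g over 𝔽_q with ∞ ∈ C(𝔽_q), and suppose there exists a nonzero function h on C, defined over 𝔽_{q^{1/2}}-algebraic closure, which is a p^μ-th power, has its only pole at ∞ of order at most p^μ n + q m, and vanishes at every point of C(𝔽_q) other than ∞. If p^μ n < q, then |C(𝔽_q)| ≤ 1 + n + (q/p^μ) m. -/
/-! The principal divisor of `h` has degree `0`. Its only negative coefficient is the pole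
order at `∞`, at most `p^μ n + q m`, while each of the other rational points contributes at
least `p^μ`; hence `p^μ (|C(𝔽_q)| - 1) ≤ p^μ n + q m`. -/

namespace SmoothProjCurve

variable {q : ℕ} (C : SmoothProjCurve q)

theorem degDiv_add (D E : C.Point →₀ ℤ) : C.degDiv (D + E) = C.degDiv D + C.degDiv E :=
  Finsupp.sum_add_index' (fun _ => zero_mul _) fun _ _ _ => add_mul _ _ _

theorem degDiv_single (a : C.Point) (k : ℤ) : C.degDiv (Finsupp.single a k) = k * C.deg a :=
  Finsupp.sum_single_index (zero_mul _)

theorem sum_le_degDiv_of_nonneg {E : C.Point →₀ ℤ} (hE : 0 ≤ E) (s : Finset C.Point) :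
    ∑ v ∈ s, E v * (C.deg v : ℤ) ≤ C.degDiv E := by
  classical
  calc ∑ v ∈ s, E v * (C.deg v : ℤ)
      ≤ ∑ v ∈ s ∪ E.support, E v * (C.deg v : ℤ) :=
        Finset.sum_le_sum_of_subset_of_nonneg Finset.subset_union_left
          fun v _ _ => mul_nonneg (hE v) (Nat.cast_nonneg _)
    _ = C.degDiv E :=
        (Finsupp.sum_of_support_subset E Finset.subset_union_right (fun v k => k * (C.deg v : ℤ))
          fun _ _ => zero_mul _).symm

theorem mul_card_le_neg_of_mem_prin {D : C.Point →₀ ℤ} (hD : D ∈ C.prin) {a : C.Point}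
    (hreg : ∀ v, v ≠ a → 0 ≤ D v) {s : Finset C.Point} (ha : a ∉ s) {c : ℤ}
    (hvan : ∀ v ∈ s, c ≤ D v) : c * s.card ≤ -(D a * C.deg a) := by
  have hE : 0 ≤ D.erase a := fun v => by
    by_cases hv : v = a
    · simp [hv]
    · simpa [Finsupp.erase_ne hv] using hreg v hv
  have hdeg : D a * C.deg a + C.degDiv (D.erase a) = 0 := by
    rw [← C.degDiv_single, ← C.degDiv_add, Finsupp.single_add_erase]
    exact C.deg_prin D hD
  have hsum : c * s.card ≤ ∑ v ∈ s, (D.erase a) v * (C.deg v : ℤ) := by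
    rw [mul_comm, ← nsmul_eq_mul, ← Finset.sum_const]
    refine Finset.sum_le_sum fun v hv => ?_
    have hva : v ≠ a := ne_of_mem_of_not_mem hv ha
    rw [Finsupp.erase_ne hva]
    calc c ≤ D v := hvan v hv
      _ ≤ D v * C.deg v :=
        le_mul_of_one_le_right (hreg v hva) (by exact_mod_cast C.deg_pos v)
  linarith [C.sum_le_degDiv_of_nonneg hE s]

theorem natCard_deg_eq_one :
    Nat.card {v : C.Point // C.deg v = 1} = (C.finite_deg 1).toFinset.card :=
  Set.ncard_eq_toFinset_card _ (C.finite_deg 1)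

end SmoothProjCurve

theorem stmt16_general (p μ q n m : ℕ) (hp : p.Prime)
    (C : SmoothProjCurve q) (infty : C.Point) (hinf : C.deg infty = 1)
    (D : C.Point →₀ ℤ) (hD : D ∈ C.prin)
    (hvan : ∀ v : C.Point, v ≠ infty → C.deg v = 1 → ((p : ℤ) ^ μ ≤ D v))
    (hreg : ∀ v : C.Point, v ≠ infty → 0 ≤ D v)
    (hpole : -(((p : ℤ) ^ μ) * n + (q : ℤ) * m) ≤ D infty) :
    (Nat.card {v : C.Point // C.deg v = 1} : ℝ) ≤
      1 + (n : ℝ) + ((q : ℝ) / (p : ℝ) ^ μ) * m := by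
  classical
  set s := (C.finite_deg 1).toFinset
  have hcount : (p : ℤ) ^ μ * (s.erase infty).card ≤ (p : ℤ) ^ μ * n + q * m := by
    have := C.mul_card_le_neg_of_mem_prin hD hreg (s.notMem_erase infty) fun v hv =>
      hvan v (Finset.ne_of_mem_erase hv) (by simpa [s] using Finset.mem_of_mem_erase hv)
    rw [hinf] at this
    push_cast at this
    linarith
  have hP : (0 : ℝ) < (p : ℝ) ^ μ := pow_pos (Nat.cast_pos.mpr hp.pos) μ
  have hcountR : ((s.erase infty).card : ℝ) ≤ n + (q : ℝ) / (p : ℝ) ^ μ * m := by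
    rw [div_mul_eq_mul_div, ← sub_le_iff_le_add', le_div_iff₀ hP]
    have hcount' : (p : ℝ) ^ μ * (s.erase infty).card ≤ (p : ℝ) ^ μ * n + q * m := by
      exact_mod_cast hcount
    linarith
  have hcard : (s.card : ℝ) ≤ (s.erase infty).card + 1 := by
    exact_mod_cast Nat.sub_le_iff_le_add.mp Finset.pred_card_le_card_erase
  rw [C.natCard_deg_eq_one]
  linarith

/-- The zero/pole count giving inequality (3.4): suppose `h` is a nonzero function on `C`
(represented by its principal divisor `D`) which is a `p^μ`-th power, has its only pole
at the rational point `∞`, of order at most `p^μ n + q m` (so it vanishes to order at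
least `p^μ` at every `𝔽_q`-rational point other than `∞` at which it vanishes; here it is
assumed to vanish at all of them).  If `p^μ n < q` then
`|C(𝔽_q)| ≤ 1 + n + (q/p^μ) m`. -/
theorem stmt16 (p μ q n m : ℕ) (hp : p.Prime)
    (C : SmoothProjCurve q) (infty : C.Point) (hinf : C.deg infty = 1)
    (D : C.Point →₀ ℤ) (hD : D ∈ C.prin)
    (hvan : ∀ v : C.Point, v ≠ infty → C.deg v = 1 → ((p : ℤ) ^ μ ≤ D v))
    (hreg : ∀ v : C.Point, v ≠ infty → 0 ≤ D v)
    (hpole : -(((p : ℤ) ^ μ) * n + (q : ℤ) * m) ≤ D infty)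
    (hlt : p ^ μ * n < q) :
    (Nat.card {v : C.Point // C.deg v = 1} : ℝ) ≤
      1 + (n : ℝ) + ((q : ℝ) / (p : ℝ) ^ μ) * m :=
  stmt16_general p μ q n m hp C infty hinf D hD hvan hreg hpole
end
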